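/- The pentagonal quasilattice, i.e. the additive subgroup of ℂ generated by the five fifth roots of unity e^{2πik/5}, k = 0, 1, 2, 3, 4 (their set of integer linear combinations), is dense in ℂ; in particular it is not a discrete subgroup of ℂ, hence it is not a lattice. -/

import Mathlib

open Complex

/-- The pentagonal quasilattice: the set of integer linear combinations of the five
fifth roots of unity `e^{2πik/5}`, `k = 0, …, 4`. -/
noncomputable def pentagonalQuasilattice : Set ℂ :=
  {z | ∃ a : Fin 5 → ℤ,
    z = ∑ k : Fin 5, (a k : ℂ) * Complex.exp (2 * Real.pi * Complex.I * (k : ℕ) / 5)}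

/-!
With `ζ = e^{2πi/5}` we have `1 + ζ + ζ⁴ = 1 + 2 cos (2π/5) = φ`, the golden ratio. Since `φ` is
irrational, `A = ℤ + ℤφ` is dense in `ℝ`, and the quasilattice contains `A + Aζ`, which is dense in
`ℂ` because `1, ζ` is an `ℝ`-basis of `ℂ`. A dense subset of `ℂ` has no isolated points, whereas
the `ℤ`-span of an `ℝ`-basis is discrete; so the quasilattice is neither discrete nor a lattice.
-/

open Real Set Submodule

theorem Dense.not_discreteTopology {X : Type*} [TopologicalSpace X] [T1Space X] [PerfectSpace X]
    {s : Set X} (hs : Dense s) (hne : s.Nonempty) : ¬ DiscreteTopology s := by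
  intro _
  obtain ⟨x, hx⟩ := hne
  obtain ⟨U, hU, hUx⟩ := isOpen_induced_iff.mp (isOpen_discrete {(⟨x, hx⟩ : s)})
  have hxU : x ∈ U := by simpa using congrArg (⟨x, hx⟩ ∈ ·) hUx
  obtain ⟨y, ⟨hyU, hyx⟩, hys⟩ :=
    hs.inter_open_nonempty (U \ {x}) (hU.sdiff isClosed_singleton)
      (Filter.nonempty_of_mem (sdiff_mem_nhdsWithin_compl (hU.mem_nhds hxU) {x}))
  have hy : (⟨y, hys⟩ : s) ∈ Subtype.val ⁻¹' U := hyU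
  rw [hUx, mem_singleton_iff, Subtype.mk.injEq] at hy
  exact hyx hy

theorem Module.Basis.not_dense_span_int {ι E : Type*} [Finite ι] [NormedAddCommGroup E]
    [NormedSpace ℝ E] [Nontrivial E] (b : Basis ι ℝ E) :
    ¬ Dense (span ℤ (range b) : Set E) :=
  fun h ↦ h.not_discreteTopology ⟨0, zero_mem _⟩
    (inferInstanceAs (DiscreteTopology (span ℤ (range b))))

theorem coe_span_int_range_pair {R : Type*} [Ring R] (a b : R) :
    (span ℤ (range ![a, b]) : Set R) = {z | ∃ m n : ℤ, z = m * a + n * b} := by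
  ext z
  simp only [Matrix.range_cons_cons_empty, SetLike.mem_coe, mem_span_pair, zsmul_eq_mul,
    mem_ofPred_eq, eq_comm]

theorem Complex.dense_image_ofReal_add_ofReal_mul {A : Set ℝ} (hA : Dense A) {w : ℂ}
    (hw : w.im ≠ 0) : Dense ((fun p : ℝ × ℝ ↦ (p.1 : ℂ) + p.2 * w) '' A ×ˢ A) := by
  refine DenseRange.dense_image (Function.Surjective.denseRange fun z ↦ ?_) (by fun_prop)
    (hA.prod hA)
  refine ⟨(z.re - z.im / w.im * w.re, z.im / w.im), Complex.ext ?_ ?_⟩ <;>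
    simp [field]

theorem Real.cos_two_pi_div_five : cos (2 * π / 5) = (goldenRatio - 1) / 2 := by
  rw [show 2 * π / 5 = 2 * (π / 5) by ring, cos_two_mul, cos_pi_div_five,
    show (1 + √5) / 4 = goldenRatio / 2 by ring]
  linear_combination goldenRatio_sq / 2

namespace pentagonalQuasilattice

noncomputable def zeta : ℂ := exp (2 * π * I / 5)

local notation "ζ" => zeta

theorem exp_mul_natCast_div_five (k : ℕ) : exp (2 * π * I * k / 5) = ζ ^ k := by
  rw [zeta, ← Complex.exp_nat_mul]
  ring_nf

theorem zeta_pow_five : ζ ^ 5 = 1 := by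
  rw [← exp_mul_natCast_div_five, Nat.cast_ofNat, mul_div_cancel_right₀ _ (by norm_num),
    exp_two_pi_mul_I]

theorem zeta_eq_exp_ofReal_mul_I : ζ = exp ((2 * π / 5 : ℝ) * I) := by
  rw [zeta]
  push_cast
  ring_nf

theorem zeta_im_pos : 0 < (ζ).im := by
  rw [zeta_eq_exp_ofReal_mul_I, exp_ofReal_mul_I_im]
  exact sin_pos_of_pos_of_lt_pi (by positivity) (by linarith [pi_pos])

theorem ofReal_goldenRatio : (goldenRatio : ℂ) = 1 + ζ + ζ ^ 4 := by
  have hinv : ζ ^ 4 = ζ⁻¹ := eq_inv_of_mul_eq_one_left (by rw [← pow_succ, zeta_pow_five])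
  have hcos : 2 * Complex.cos (2 * π / 5 : ℝ) = ζ + ζ ^ 4 := by
    rw [two_cos, hinv, zeta_eq_exp_ofReal_mul_I, ← Complex.exp_neg, neg_mul]
  rw [add_assoc, ← hcos, ← ofReal_cos, Real.cos_two_pi_div_five]
  push_cast
  ring

theorem zero_mem : (0 : ℂ) ∈ pentagonalQuasilattice := ⟨0, by simp⟩

theorem ofReal_add_ofReal_mul_zeta_mem (m n m' n' : ℤ) :
    ((m • goldenRatio + n • 1 : ℝ) : ℂ) + ((m' • goldenRatio + n' • 1 : ℝ) : ℂ) * ζ ∈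
      pentagonalQuasilattice := by
  simp only [ofReal_add, ofReal_zsmul, ofReal_one, ofReal_goldenRatio]
  refine ⟨![m + n + m', m + m' + n', m', 0, m], ?_⟩
  simp [exp_mul_natCast_div_five, Fin.sum_univ_five]
  linear_combination m' * zeta_pow_five

theorem dense : Dense pentagonalQuasilattice := by
  have hA : Dense (AddSubgroup.closure {goldenRatio, 1} : Set ℝ) :=
    dense_addSubgroupClosure_pair_iff.mpr (by rw [div_one]; exact goldenRatio_irrational)
  refine (Complex.dense_image_ofReal_add_ofReal_mul hA zeta_im_pos.ne').mono ?_
  rintro _ ⟨⟨a, b⟩, ⟨ha, hb⟩, rfl⟩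
  obtain ⟨m, n, rfl⟩ := AddSubgroup.mem_closure_pair.mp ha
  obtain ⟨m', n', rfl⟩ := AddSubgroup.mem_closure_pair.mp hb
  exact ofReal_add_ofReal_mul_zeta_mem m n m' n'

end pentagonalQuasilattice

/-- The pentagonal quasilattice is dense in `ℂ`; in particular it is not a discrete
subgroup of `ℂ`, hence it is not a lattice (the `ℤ`-span of a basis of `ℝ² ≅ ℂ`). -/
theorem pentagonalQuasilattice_dense_not_discrete_not_lattice :
    Dense pentagonalQuasilattice ∧
    ¬ DiscreteTopology pentagonalQuasilattice ∧
    ¬ ∃ v₁ v₂ : ℂ, LinearIndependent ℝ ![v₁, v₂] ∧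
        pentagonalQuasilattice =
          {z : ℂ | ∃ m n : ℤ, z = (m : ℂ) * v₁ + (n : ℂ) * v₂} := by
  have hQ := pentagonalQuasilattice.dense
  refine ⟨hQ, hQ.not_discreteTopology ⟨0, pentagonalQuasilattice.zero_mem⟩, ?_⟩
  rintro ⟨v₁, v₂, hli, hQ_eq⟩
  have hcard : Fintype.card (Fin 2) = Module.finrank ℝ ℂ := by simp
  apply (basisOfLinearIndependentOfCardEqFinrank hli hcard).not_dense_span_int
  rwa [coe_basisOfLinearIndependentOfCardEqFinrank, coe_span_int_range_pair, ← hQ_eq]
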